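/- Work in the Euclidean plane ℝ² with coordinates (x₁, x₂). Fix ρ > 0. For s ∈ ℝ with |s| > ρ, let D_s be the closed disk with center (s, (s²+ρ²)/(2ρ)) and radius (s²+ρ²)/(2ρ), let B_ρ(0) be the open ball of radius ρ centered at the origin, and let W_s = {(x₁,x₂) : x₂ ≥ 0} \ (D_s ∪ B_ρ(0)). Then for every point q = (q₁, q₂) with 0 ≤ q₂ < ρ, either ‖q‖ < ρ (i.e. q ∈ B_ρ(0)), or there exists s with |s| > ρ such that q ∈ W_s and the connected component of q inside W_s is a bounded set. In other words, the open ball B_ρ(0) together with the bounded connected components A_s of the sets W_s cover the strip {(x₁,x₂) : 0 ≤ x₂ < ρ}. -/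

import Mathlib

/-!
If `‖q‖ ≥ ρ` then `q 0 ≠ 0`; take `s = t * q 0` with `t > 1`. In the open rectangle `P`
("pocket") of points whose first coordinate lies strictly between `0` and `s` and whose second
lies in `(-ρ, ρ)`, no point of the frontier of `P` belongs to `W_s`: the ball `B_ρ(0)` covers the
side `x₁ = 0`, and the tangent disk `D_s`, which passes through `(0, ρ)` and touches the axis at
`(s, 0)`, covers the top side and the side `x₁ = s`, while the bottom side lies below the
half-plane. So the connected component of `q` in `W_s` is trapped in the bounded set `P`.
For `t` large, `q` lies outside `D_s` and `|s| > ρ`.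
-/

open Set Metric

/-- The point of the Euclidean plane `ℝ²` with coordinates `(a, b)`. -/
noncomputable def pt (a b : ℝ) : EuclideanSpace ℝ (Fin 2) :=
  (EuclideanSpace.equiv (Fin 2) ℝ).symm ![a, b]

/-- The region `W_s`: the closed upper half-plane with the tangent disk `D_s`
(center `(s, (s²+ρ²)/(2ρ))`, radius `(s²+ρ²)/(2ρ)`) and the open ball `B_ρ(0)` removed. -/
noncomputable def Wset (ρ s : ℝ) : Set (EuclideanSpace ℝ (Fin 2)) :=
  {p : EuclideanSpace ℝ (Fin 2) | 0 ≤ p 1} \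
    (Metric.closedBall (pt s ((s ^ 2 + ρ ^ 2) / (2 * ρ))) ((s ^ 2 + ρ ^ 2) / (2 * ρ)) ∪
      Metric.ball (0 : EuclideanSpace ℝ (Fin 2)) ρ)

theorem connectedComponentIn_subset_of_closure_inter_subset {α : Type*} [TopologicalSpace α]
    {W U : Set α} {q : α} (hU : IsOpen U) (hqU : q ∈ U) (h : closure U ∩ W ⊆ U) :
    connectedComponentIn W q ⊆ U := by
  rcases eq_empty_or_nonempty (connectedComponentIn W q) with hC | hC
  · simp [hC]
  refine isPreconnected_connectedComponentIn.subset_of_closure_inter_subset hU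
    ⟨q, mem_connectedComponentIn ?_, hqU⟩ ?_
  · exact connectedComponentIn_nonempty_iff.mp hC
  · exact (inter_subset_inter_right _ (connectedComponentIn_subset W q)).trans h

namespace EuclideanSpace

theorem norm_sq_fin_two (x : EuclideanSpace ℝ (Fin 2)) : ‖x‖ ^ 2 = x 0 ^ 2 + x 1 ^ 2 := by
  simp [real_norm_sq_eq, Fin.sum_univ_two]

theorem dist_sq_fin_two (x y : EuclideanSpace ℝ (Fin 2)) :
    dist x y ^ 2 = (x 0 - y 0) ^ 2 + (x 1 - y 1) ^ 2 := by
  simp [dist_sq_eq, Fin.sum_univ_two, Real.dist_eq, sq_abs]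

end EuclideanSpace

open EuclideanSpace

@[simp] theorem pt_apply_zero (a b : ℝ) : pt a b 0 = a := by simp [pt]
@[simp] theorem pt_apply_one (a b : ℝ) : pt a b 1 = b := by simp [pt]

theorem mem_Wset_iff {ρ s : ℝ} (hρ : 0 < ρ) {x : EuclideanSpace ℝ (Fin 2)} :
    x ∈ Wset ρ s ↔ 0 ≤ x 1 ∧ (s ^ 2 + ρ ^ 2) * x 1 < ρ * ((x 0 - s) ^ 2 + x 1 ^ 2) ∧
      ρ ^ 2 ≤ x 0 ^ 2 + x 1 ^ 2 := by
  have hdisk : dist x (pt s ((s ^ 2 + ρ ^ 2) / (2 * ρ))) ≤ (s ^ 2 + ρ ^ 2) / (2 * ρ) ↔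
      ρ * ((x 0 - s) ^ 2 + x 1 ^ 2) ≤ (s ^ 2 + ρ ^ 2) * x 1 := by
    set r := (s ^ 2 + ρ ^ 2) / (2 * ρ) with hr
    have hρr : 2 * ρ * r = s ^ 2 + ρ ^ 2 := by rw [hr]; field_simp
    rw [← sq_le_sq₀ dist_nonneg (by positivity), dist_sq_fin_two, pt_apply_zero, pt_apply_one,
      ← mul_le_mul_iff_of_pos_left (mul_pos two_pos hρ)]
    have key : 2 * ρ * ((x 0 - s) ^ 2 + (x 1 - r) ^ 2) - 2 * ρ * r ^ 2 =
        2 * (ρ * ((x 0 - s) ^ 2 + x 1 ^ 2) - (s ^ 2 + ρ ^ 2) * x 1) := by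
      linear_combination (-2 * x 1) * hρr
    constructor <;> intro h <;> linarith
  have hball : ‖x‖ < ρ ↔ x 0 ^ 2 + x 1 ^ 2 < ρ ^ 2 := by
    rw [← norm_sq_fin_two, sq_lt_sq₀ (norm_nonneg x) hρ.le]
  simp only [Wset, mem_sdiff, mem_union, mem_closedBall, mem_ball_zero_iff, hdisk, hball,
    mem_ofPred_eq, not_or, not_le, not_lt]

/-- `x 0 * (x 0 - s) < 0` says that `x 0` lies strictly between `0` and `s`, whatever the sign
of `s`. -/
def pocket (ρ s : ℝ) : Set (EuclideanSpace ℝ (Fin 2)) :=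
  {x | x 0 * (x 0 - s) < 0 ∧ |x 1| < ρ}

theorem isOpen_pocket (ρ s : ℝ) : IsOpen (pocket ρ s) :=
  (isOpen_lt (f := fun x : EuclideanSpace ℝ (Fin 2) => x 0 * (x 0 - s)) (by fun_prop)
    continuous_const).inter (isOpen_lt (f := fun x : EuclideanSpace ℝ (Fin 2) => |x 1|)
    (by fun_prop) continuous_const)

theorem closure_pocket_subset (ρ s : ℝ) :
    closure (pocket ρ s) ⊆ {x | x 0 * (x 0 - s) ≤ 0 ∧ |x 1| ≤ ρ} :=
  closure_minimal (fun _ hx => ⟨hx.1.le, hx.2.le⟩)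
    ((isClosed_le (f := fun x : EuclideanSpace ℝ (Fin 2) => x 0 * (x 0 - s)) (by fun_prop)
      continuous_const).inter (isClosed_le (f := fun x : EuclideanSpace ℝ (Fin 2) => |x 1|)
      (by fun_prop) continuous_const))

theorem isBounded_pocket (ρ s : ℝ) : Bornology.IsBounded (pocket ρ s) := by
  refine (isBounded_closedBall (x := 0) (r := |s| + ρ)).subset fun x ⟨h0, h1⟩ => ?_
  have hx0 : x 0 ^ 2 ≤ s ^ 2 := by nlinarith
  have hx1 : x 1 ^ 2 ≤ ρ ^ 2 := by nlinarith [sq_abs (x 1), abs_nonneg (x 1)]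
  have hnorm : ‖x‖ ^ 2 ≤ (|s| + ρ) ^ 2 := by
    nlinarith [norm_sq_fin_two x, sq_abs s, abs_nonneg s, abs_nonneg (x 1)]
  rw [mem_closedBall_zero_iff]
  exact (sq_le_sq₀ (norm_nonneg x) (by linarith [abs_nonneg s, abs_nonneg (x 1)])).mp hnorm

theorem mem_pocket_of_mem_Wset {ρ s : ℝ} (hρ : 0 < ρ) {x : EuclideanSpace ℝ (Fin 2)}
    (hW : x ∈ Wset ρ s) (h0 : x 0 * (x 0 - s) ≤ 0) (h1 : |x 1| ≤ ρ) : x ∈ pocket ρ s := by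
  obtain ⟨hx1, hdisk, hball⟩ := (mem_Wset_iff hρ).mp hW
  rw [abs_of_nonneg hx1] at h1
  have hx1ρ : x 1 < ρ := by
    refine h1.lt_of_ne fun hρ' => ?_
    rw [hρ'] at hdisk
    nlinarith
  refine ⟨h0.lt_of_ne fun h => ?_, by rwa [abs_of_nonneg hx1]⟩
  rcases mul_eq_zero.mp h with hx0 | hxs
  · rw [hx0] at hball; nlinarith
  · rw [sub_eq_zero.mp hxs] at hdisk
    nlinarith [mul_le_mul_of_nonneg_left hx1ρ.le (mul_nonneg hρ.le hx1),
      mul_nonneg (sq_nonneg s) hx1]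

theorem connectedComponentIn_Wset_subset_pocket {ρ s : ℝ} (hρ : 0 < ρ)
    {q : EuclideanSpace ℝ (Fin 2)} (hq : q ∈ pocket ρ s) :
    connectedComponentIn (Wset ρ s) q ⊆ pocket ρ s :=
  connectedComponentIn_subset_of_closure_inter_subset (isOpen_pocket ρ s) hq
    fun _ ⟨hcl, hW⟩ => mem_pocket_of_mem_Wset hρ hW (closure_pocket_subset ρ s hcl).1
      (closure_pocket_subset ρ s hcl).2

theorem exists_mem_Wset_mem_pocket {ρ : ℝ} (hρ : 0 < ρ) {q : EuclideanSpace ℝ (Fin 2)}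
    (hq0 : 0 ≤ q 1) (hq1 : q 1 < ρ) (hq : ρ ≤ ‖q‖) :
    ∃ s : ℝ, ρ < |s| ∧ q ∈ Wset ρ s ∧ q ∈ pocket ρ s := by
  have hq2 : ρ ^ 2 ≤ q 0 ^ 2 + q 1 ^ 2 := by nlinarith [norm_sq_fin_two q]
  have hqx : 0 < |q 0| := abs_pos.mpr fun h => by rw [h] at hq2; nlinarith
  have hρq : 0 < ρ - q 1 := sub_pos.mpr hq1
  -- The first summand keeps `q` outside `D_s` for `s = t * q 0`, the second makes `ρ < |s|`.
  set t := 2 * ρ / (ρ - q 1) + ρ / |q 0| + 1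
  have ht_disk : 2 * ρ ≤ (ρ - q 1) * t := by
    have : (ρ - q 1) * (2 * ρ / (ρ - q 1)) = 2 * ρ := mul_div_cancel₀ _ hρq.ne'
    nlinarith [div_nonneg hρ.le hqx.le]
  have ht_far : ρ < t * |q 0| := by
    have : ρ / |q 0| * |q 0| = ρ := div_mul_cancel₀ _ hqx.ne'
    nlinarith [div_nonneg (mul_nonneg zero_le_two hρ.le) hρq.le]
  have ht_one : 1 < t := by nlinarith
  refine ⟨t * q 0, ?_, (mem_Wset_iff hρ).mpr ⟨hq0, ?_, hq2⟩, ?_, by rwa [abs_of_nonneg hq0]⟩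
  · rwa [abs_mul, abs_of_pos (by linarith)]
  · have : 0 ≤ t * q 0 ^ 2 * ((ρ - q 1) * t - 2 * ρ) :=
      mul_nonneg (mul_nonneg (by linarith) (sq_nonneg _)) (by linarith)
    nlinarith [mul_pos (mul_pos hρ hρ) hρq]
  · nlinarith [sq_pos_of_pos hqx, sq_abs (q 0)]

/-- Every point `q` of the strip `{0 ≤ x₂ < ρ}` lies either in the open ball `B_ρ(0)` or in a
bounded connected component of some `W_s` with `|s| > ρ`: the ball together with the bounded
components `A_s` cover the strip. -/
theorem strip_covered_by_ball_and_bounded_components (ρ : ℝ) (hρ : 0 < ρ)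
    (q : EuclideanSpace ℝ (Fin 2)) (hq0 : 0 ≤ q 1) (hq1 : q 1 < ρ) :
    ‖q‖ < ρ ∨ ∃ s : ℝ, ρ < |s| ∧ q ∈ Wset ρ s ∧
      Bornology.IsBounded (connectedComponentIn (Wset ρ s) q) := by
  refine (lt_or_ge ‖q‖ ρ).imp id fun hq => ?_
  obtain ⟨s, hs, hqW, hqP⟩ := exists_mem_Wset_mem_pocket hρ hq0 hq1 hq
  exact ⟨s, hs, hqW,
    (isBounded_pocket ρ s).subset (connectedComponentIn_Wset_subset_pocket hρ hqP)⟩
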